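/- Under the CBO setup, if γ ∈ (0,1), ξ > 0 and N ∈ ℕ are such that θ < 1, then there exists a random vector x_∞ : Ω → ℝ^d such that for every i = 1,…,N, x_k^i → x_∞ almost surely as k → ∞. -/

import Mathlib

open MeasureTheory ProbabilityTheory
open scoped RealInnerProductSpace

noncomputable section

/-- The diameter of a vector `y ∈ ℝ^N`: `max_i y_i - min_i y_i`. -/
def vdiam {N : ℕ} (y : Fin N → ℝ) : ℝ := (⨆ i, y i) - (⨅ i, y i)

/-- Data of the discrete consensus-based optimization (CBO) method with noisy objective
function: drift parameter `γ`, noise level `ξ`, weight parameter `α`, particle positions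
`x k i : Ω → ℝ^d`, diffusion noises `η k s i : Ω → ℝ`, and the values `fhat k i : Ω → ℝ`
returned by the stochastic oracle (i.e. `f̂(x_k^i, ω_k^i)`). -/
structure CBOData (N d : ℕ) (Ω : Type) [MeasurableSpace Ω] where
  γ : ℝ
  ξ : ℝ
  α : ℝ
  x : ℕ → Fin N → Ω → EuclideanSpace ℝ (Fin d)
  η : ℕ → Fin d → Fin N → Ω → ℝ
  fhat : ℕ → Fin N → Ω → ℝ

namespace CBOData

variable {N d : ℕ} {Ω : Type} [MeasurableSpace Ω]

/-- The noisy consensus point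
`x̂_k^α = (Σ_i x_k^i e^{-α f̂(x_k^i, ω_k^i)}) / (Σ_i e^{-α f̂(x_k^i, ω_k^i)})`. -/
def xhat (C : CBOData N d Ω) (k : ℕ) (ω : Ω) : EuclideanSpace ℝ (Fin d) :=
  (∑ i, Real.exp (-C.α * C.fhat k i ω))⁻¹ •
    ∑ i, Real.exp (-C.α * C.fhat k i ω) • C.x k i ω

/-- The vector of `s`-th components of the particles: `y_k^s = (x_{k,s}^1, …, x_{k,s}^N)`. -/
def y (C : CBOData N d Ω) (k : ℕ) (s : Fin d) (ω : Ω) : Fin N → ℝ :=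
  fun i => C.x k i ω s

/-- The contraction constant `θ = 1 - γ + 8 ξ (log(√2 N))^{1/2}`. -/
def th (C : CBOData N d Ω) : ℝ :=
  1 - C.γ + 8 * C.ξ * Real.sqrt (Real.log (Real.sqrt 2 * N))

/-- The σ-algebra generated by the noises of iteration `k`. -/
def noiseσ (C : CBOData N d Ω) (k : ℕ) : MeasurableSpace Ω :=
  ⨆ s : Fin d, ⨆ i : Fin N, MeasurableSpace.comap (C.η k s i) inferInstance

/-- The σ-algebra generated by the particle positions and the oracle evaluations up to
iteration `k`, together with the noises of iterations `< k`. -/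
def histσ (C : CBOData N d Ω) (k : ℕ) : MeasurableSpace Ω :=
  ((⨆ (l : ℕ) (_ : l ≤ k), ⨆ i : Fin N,
      (MeasurableSpace.comap (C.x l i) inferInstance ⊔
        MeasurableSpace.comap (C.fhat l i) inferInstance)) ⊔
    ⨆ (l : ℕ) (_ : l < k), ⨆ s : Fin d, ⨆ i : Fin N,
      MeasurableSpace.comap (C.η l s i) inferInstance)

/-- `σ_k`: the σ-algebra generated by `{x_l^i : l ≤ k}` and `{η_{l,s}^i : l ≤ k}`. -/
def sigmak (C : CBOData N d Ω) (k : ℕ) : MeasurableSpace Ω :=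
  ((⨆ (l : ℕ) (_ : l ≤ k), ⨆ i : Fin N,
      MeasurableSpace.comap (C.x l i) inferInstance) ⊔
    ⨆ (l : ℕ) (_ : l ≤ k), ⨆ s : Fin d, ⨆ i : Fin N,
      MeasurableSpace.comap (C.η l s i) inferInstance)

/-- The hypotheses of the CBO setup: `N, d ≥ 1`, `γ ∈ (0,1)`, `ξ > 0`, `α > 0`,
measurability of all the random variables, the noises are i.i.d. centered Gaussian with
variance `ξ²` and, at each iteration `k`, the family of iteration-`k` noises is independent
of the particle positions and oracle evaluations up to iteration `k`; finally the particles
evolve according to the (componentwise) CBO update rule. -/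
structure Hyp (C : CBOData N d Ω) (P : Measure Ω) : Prop where
  hN : 1 ≤ N
  hd : 1 ≤ d
  hγ : C.γ ∈ Set.Ioo (0:ℝ) 1
  hξ : 0 < C.ξ
  hα : 0 < C.α
  meas_x : ∀ k i, Measurable (C.x k i)
  meas_η : ∀ k s i, Measurable (C.η k s i)
  meas_fhat : ∀ k i, Measurable (C.fhat k i)
  η_gauss : ∀ k s i, Measure.map (C.η k s i) P = gaussianReal 0 ⟨C.ξ ^ 2, sq_nonneg C.ξ⟩
  η_iid : iIndepFun
    (fun p : ℕ × Fin d × Fin N => C.η p.1 p.2.1 p.2.2) P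
  η_indep_hist : ∀ k, Indep (C.noiseσ k) (C.histσ k) P
  evol : ∀ k i s ω, C.x (k+1) i ω s =
    C.x k i ω s - C.γ * (C.x k i ω s - C.xhat k ω s)
      - (C.x k i ω s - C.xhat k ω s) * C.η k s i ω

end CBOData

open Filter

/-!
Fix a coordinate `s`. Since the consensus point is a convex combination of the particles, one
step multiplies the spread `vdiam` of the `s`-th coordinates by at most
`1 - γ + 2 maxᵢ |η_{k,s}^i|`. These factors are independent across iterations, and by Jensen's
inequality and the Gaussian moment generating function their mean is at most `θ`, so the
expected product of the first `n` of them is at most `θⁿ`. Hence these products are almost surely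
summable. They bound both the increments of every particle and the distances between particles,
so all particles are Cauchy sequences with a common limit.
-/

namespace ProbabilityTheory

variable {Ω : Type*} [MeasurableSpace Ω] {P : Measure Ω} {v : NNReal}

lemma iIndepFun.curry {ι κ β : Type*} [MeasurableSpace β] {X : ι → κ → Ω → β}
    (mX : ∀ i j, Measurable (X i j)) (h : iIndepFun (fun p : ι × κ => X p.1 p.2) P) :
    iIndepFun (fun i ω j => X i j ω) P := by
  have := h.isProbabilityMeasure
  have : ∀ i j, IsProbabilityMeasure (P.map (X i j)) :=
    fun i j => Measure.isProbabilityMeasure_map (mX i j).aemeasurable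
  have hrow (i : ι) : P.map (fun ω j => X i j ω) = Measure.infinitePi (fun j => P.map (X i j)) :=
    (iIndepFun_iff_map_fun_eq_infinitePi_map (fun j => mX i j)).1
      (h.precomp (g := Prod.mk i) (Prod.mk_right_injective i))
  have hcomp : (fun ω i j => X i j ω) =
      MeasurableEquiv.curry ι κ β ∘ fun ω (p : ι × κ) => X p.1 p.2 ω := rfl
  have hall : P.map (fun ω (p : ι × κ) => X p.1 p.2 ω)
      = Measure.infinitePi (fun p : ι × κ => P.map (X p.1 p.2)) :=
    (iIndepFun_iff_map_fun_eq_infinitePi_map (fun p : ι × κ => mX p.1 p.2)).1 h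
  rw [iIndepFun_iff_map_fun_eq_infinitePi_map (fun i => by fun_prop), hcomp,
    ← Measure.map_map (by fun_prop) (by fun_prop), hall,
    Measure.infinitePi_map_curry (fun i j => P.map (X i j))]
  simp_rw [hrow]

lemma integral_exp_mul_of_map_eq_gaussianReal {X : Ω → ℝ}
    (hX : P.map X = gaussianReal 0 v) (t : ℝ) :
    ∫ ω, Real.exp (t * X ω) ∂P = Real.exp (v * t ^ 2 / 2) := by
  simpa [mgf] using mgf_gaussianReal hX t

variable {ι : Type*} [Fintype ι] {X : ι → Ω → ℝ}

lemma integrable_iSup_abs_of_map_eq_gaussianReal (hXm : ∀ i, Measurable (X i))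
    (hX : ∀ i, P.map (X i) = gaussianReal 0 v) :
    Integrable (fun ω => ⨆ i, |X i ω|) P := by
  have hint (i : ι) : Integrable (X i) P := by
    have := (memLp_id_gaussianReal (μ := 0) (v := v) 1).integrable le_rfl
    rw [← hX i] at this
    exact (integrable_map_measure aestronglyMeasurable_id (hXm i).aemeasurable).1 this
  refine (integrable_finsetSum Finset.univ fun i _ => (hint i).abs).mono
    (Measurable.iSup fun i => (hXm i).abs).aestronglyMeasurable (ae_of_all _ fun ω => ?_)
  rw [Real.norm_of_nonneg (Real.iSup_nonneg fun i => abs_nonneg _),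
    Real.norm_of_nonneg (Finset.sum_nonneg fun i _ => abs_nonneg _)]
  exact Real.iSup_le (fun i => Finset.single_le_sum (f := fun i => |X i ω|)
    (fun i _ => abs_nonneg _) (Finset.mem_univ i)) (Finset.sum_nonneg fun i _ => abs_nonneg _)

variable [IsProbabilityMeasure P]

lemma integrable_exp_mul_of_map_eq_gaussianReal {Y : Ω → ℝ}
    (hY : P.map Y = gaussianReal 0 v) (t : ℝ) :
    Integrable (fun ω => Real.exp (t * Y ω)) P :=
  mgf_pos_iff.1 (by rw [mgf_gaussianReal hY]; positivity)

-- Jensen's inequality for `exp`, combined with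
-- `exp (t max |Xᵢ|) ≤ ∑ᵢ (exp (t Xᵢ) + exp (-t Xᵢ))`.
lemma mul_integral_iSup_abs_le_of_map_eq_gaussianReal [Nonempty ι]
    (hXm : ∀ i, Measurable (X i)) (hX : ∀ i, P.map (X i) = gaussianReal 0 v) (t : ℝ) :
    t * ∫ ω, ⨆ i, |X i ω| ∂P ≤ Real.log (2 * Fintype.card ι) + v * t ^ 2 / 2 := by
  set M : Ω → ℝ := fun ω => ⨆ i, |X i ω|
  set S : Ω → ℝ := fun ω => ∑ i, (Real.exp (t * X i ω) + Real.exp (-t * X i ω))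
  have hpair (i : ι) : Integrable (fun ω => Real.exp (t * X i ω) + Real.exp (-t * X i ω)) P :=
    (integrable_exp_mul_of_map_eq_gaussianReal (hX i) t).add
      (integrable_exp_mul_of_map_eq_gaussianReal (hX i) (-t))
  have hS : Integrable S P := integrable_finsetSum _ fun i _ => hpair i
  have hexp_le (ω : Ω) : Real.exp (t * M ω) ≤ S ω := by
    obtain ⟨i, hi⟩ := Finite.exists_max fun i => |X i ω|
    have hMi : M ω = |X i ω| := le_antisymm (ciSup_le hi)
      (le_ciSup (f := fun i => |X i ω|) (Set.finite_range _).bddAbove i)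
    have hexp_abs : Real.exp (t * |X i ω|) ≤ Real.exp (t * X i ω) + Real.exp (-t * X i ω) := by
      rcases abs_cases (X i ω) with ⟨h, _⟩ | ⟨h, _⟩ <;> rw [h]
      · linarith [Real.exp_pos (-t * X i ω)]
      · rw [neg_mul_comm]; linarith [Real.exp_pos (t * X i ω)]
    rw [hMi]
    exact hexp_abs.trans (Finset.single_le_sum (f := fun i => Real.exp (t * X i ω) +
      Real.exp (-t * X i ω)) (fun i _ => by positivity) (Finset.mem_univ i))
  have hM : Integrable M P := integrable_iSup_abs_of_map_eq_gaussianReal hXm hX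
  have hexpM : Integrable (fun ω => Real.exp (t * M ω)) P :=
    hS.mono ((Measurable.iSup fun i => (hXm i).abs).const_mul t).exp.aestronglyMeasurable
      (ae_of_all _ fun ω => by
        rw [Real.norm_of_nonneg (Real.exp_pos _).le]
        exact (hexp_le ω).trans (Real.le_norm_self _))
  have hS_int : ∫ ω, S ω ∂P = 2 * Fintype.card ι * Real.exp (v * t ^ 2 / 2) := by
    simp only [S]
    rw [integral_finsetSum _ fun i _ => hpair i]
    simp_rw [integral_add (integrable_exp_mul_of_map_eq_gaussianReal (hX _) t)
      (integrable_exp_mul_of_map_eq_gaussianReal (hX _) (-t)),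
      integral_exp_mul_of_map_eq_gaussianReal (hX _), neg_sq]
    simp [Finset.sum_const]
    ring
  have hjensen : Real.exp (∫ ω, t * M ω ∂P) ≤ ∫ ω, Real.exp (t * M ω) ∂P :=
    convexOn_exp.map_integral_le Real.continuous_exp.continuousOn isClosed_univ
      (ae_of_all _ fun _ => Set.mem_univ _) (hM.const_mul t) hexpM
  have hbound : Real.exp (t * ∫ ω, M ω ∂P)
      ≤ Real.exp (Real.log (2 * Fintype.card ι) + v * t ^ 2 / 2) := by
    rw [Real.exp_add, Real.exp_log (by positivity), ← hS_int, ← integral_const_mul]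
    exact hjensen.trans (integral_mono hexpM hS hexp_le)
  exact Real.exp_le_exp.1 hbound

lemma integral_iSup_abs_le_of_map_eq_gaussianReal [Nonempty ι] (hv : v ≠ 0)
    (hXm : ∀ i, Measurable (X i)) (hX : ∀ i, P.map (X i) = gaussianReal 0 v) :
    ∫ ω, ⨆ i, |X i ω| ∂P ≤ Real.sqrt (2 * v * Real.log (2 * Fintype.card ι)) := by
  set a := Real.log (2 * Fintype.card ι)
  have ha : 0 < a := Real.log_pos (by
    have : (1 : ℝ) ≤ Fintype.card ι := by exact_mod_cast Fintype.card_pos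
    linarith)
  have hv_pos : (0 : ℝ) < v := by positivity
  set r := Real.sqrt (2 * v * a)
  have hr : 0 < r := Real.sqrt_pos.2 (by positivity)
  have hr2 : r ^ 2 = 2 * v * a := Real.sq_sqrt (by positivity)
  -- `t = r / v` is the optimal choice in the previous lemma.
  have h := mul_integral_iSup_abs_le_of_map_eq_gaussianReal hXm hX (r / v)
  have hrv : (v : ℝ) * (r / v) ^ 2 / 2 = a := by field_simp; linarith
  rw [hrv, div_mul_eq_mul_div, div_le_iff₀ hv_pos] at h
  nlinarith

end ProbabilityTheory

lemma MeasureTheory.ae_summable_of_tsum_lintegral_ne_top {Ω : Type*} [MeasurableSpace Ω]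
    {μ : Measure Ω} {f : ℕ → Ω → ℝ} (hf : ∀ n, AEMeasurable (f n) μ)
    (hf0 : ∀ n ω, 0 ≤ f n ω)
    (h : ∑' n, ∫⁻ ω, ENNReal.ofReal (f n ω) ∂μ ≠ ⊤) :
    ∀ᵐ ω ∂μ, Summable fun n => f n ω := by
  rw [← lintegral_tsum fun n => (hf n).ennreal_ofReal] at h
  filter_upwards [ae_lt_top' (by fun_prop) h] with ω hω
  simpa [ENNReal.toReal_ofReal (hf0 _ ω)] using ENNReal.summable_toReal hω.ne

lemma tendsto_limUnder_of_dist_le_of_summable {E ι : Type*} [MetricSpace E] [CompleteSpace E]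
    [Nonempty E] {x : ℕ → ι → E} {a : ℕ → ℝ} (ha : Summable a)
    (hstep : ∀ k i, dist (x k i) (x (k + 1) i) ≤ a k)
    (hspread : ∀ k i j, dist (x k i) (x k j) ≤ a k) (i j : ι) :
    Tendsto (fun k => x k i) atTop (nhds (limUnder atTop fun k => x k j)) := by
  have hj : Tendsto (fun k => x k j) atTop (nhds (limUnder atTop fun k => x k j)) :=
    tendsto_nhds_limUnder (cauchySeq_tendsto_of_complete
      (cauchySeq_of_dist_le_of_summable a (fun k => hstep k j) ha))
  exact tendsto_of_tendsto_of_dist hj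
    (squeeze_zero (fun _ => dist_nonneg) (fun k => hspread k j i) ha.tendsto_atTop_zero)

lemma EuclideanSpace.dist_le_sum_abs_sub {ι : Type*} [Fintype ι] (x y : EuclideanSpace ℝ ι) :
    dist x y ≤ ∑ s, |x s - y s| := by
  rw [EuclideanSpace.dist_eq]
  exact Real.sqrt_le_iff.2 ⟨by positivity, by
    simpa [Real.dist_eq] using
      Finset.sum_sq_le_sq_sum_of_nonneg (s := Finset.univ) fun s _ => abs_nonneg (x s - y s)⟩

lemma sqrt_two_mul_sq_mul_log_le {n : ℕ} (hn : 1 ≤ n) {ξ : ℝ} (hξ : 0 ≤ ξ) :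
    Real.sqrt (2 * ξ ^ 2 * Real.log (2 * n))
      ≤ 4 * ξ * Real.sqrt (Real.log (Real.sqrt 2 * n)) := by
  have hn' : (1 : ℝ) ≤ n := by exact_mod_cast hn
  have hlog_n : 0 ≤ Real.log n := Real.log_nonneg hn'
  have hlog_2 : 0 < Real.log 2 := Real.log_pos one_lt_two
  have hL : Real.log (Real.sqrt 2 * n) = Real.log 2 / 2 + Real.log n := by
    rw [Real.log_mul (by positivity) (by positivity), Real.log_sqrt zero_le_two]
  have h2n : Real.log (2 * n) = Real.log 2 + Real.log n :=
    Real.log_mul two_ne_zero (by positivity)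
  calc Real.sqrt (2 * ξ ^ 2 * Real.log (2 * n))
      ≤ Real.sqrt ((4 * ξ) ^ 2 * Real.log (Real.sqrt 2 * n)) := by
        refine Real.sqrt_le_sqrt ?_
        rw [hL, h2n]
        nlinarith [mul_nonneg (sq_nonneg ξ) hlog_n, mul_nonneg (sq_nonneg ξ) hlog_2.le]
    _ = 4 * ξ * Real.sqrt (Real.log (Real.sqrt 2 * n)) := by
        rw [Real.sqrt_mul' _ (by rw [hL]; positivity), Real.sqrt_sq (by positivity)]

section vdiam

variable {N : ℕ}

lemma abs_sub_le_vdiam_of_mem_Icc (u : Fin N → ℝ) {c : ℝ}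
    (hc : c ∈ Set.Icc (⨅ j, u j) (⨆ j, u j)) (i : Fin N) : |u i - c| ≤ vdiam u := by
  have hi := ciInf_le (Set.finite_range u).bddBelow i
  have hi' := le_ciSup (Set.finite_range u).bddAbove i
  rw [abs_le, vdiam]
  constructor <;> linarith [hc.1, hc.2]

lemma abs_sub_le_vdiam (u : Fin N → ℝ) (i j : Fin N) : |u i - u j| ≤ vdiam u :=
  abs_sub_le_vdiam_of_mem_Icc u
    ⟨ciInf_le (Set.finite_range u).bddBelow j, le_ciSup (Set.finite_range u).bddAbove j⟩ i

lemma vdiam_nonneg [NeZero N] (u : Fin N → ℝ) : 0 ≤ vdiam u :=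
  (abs_nonneg _).trans (abs_sub_le_vdiam u 0 0)

lemma vdiam_le_of_forall_sub_le [NeZero N] {u : Fin N → ℝ} {D : ℝ}
    (h : ∀ i j, u i - u j ≤ D) : vdiam u ≤ D := by
  have hsup : ⨆ i, u i ≤ D + ⨅ j, u j :=
    ciSup_le fun i => by linarith [le_ciInf fun j => (by linarith [h i j] : u i - D ≤ u j)]
  rw [vdiam]
  linarith

lemma inv_sum_mul_sum_mem_Icc [NeZero N] (u w : Fin N → ℝ) (hw : ∀ i, 0 < w i) :
    (∑ i, w i)⁻¹ * ∑ i, w i * u i ∈ Set.Icc (⨅ i, u i) (⨆ i, u i) := by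
  have hsum : 0 < ∑ i, w i := Finset.sum_pos (fun i _ => hw i) Finset.univ_nonempty
  constructor
  · rw [le_inv_mul_iff₀ hsum, Finset.sum_mul]
    exact Finset.sum_le_sum fun i _ =>
      mul_le_mul_of_nonneg_left (ciInf_le (Set.finite_range u).bddBelow i) (hw i).le
  · rw [inv_mul_le_iff₀ hsum, Finset.sum_mul]
    exact Finset.sum_le_sum fun i _ =>
      mul_le_mul_of_nonneg_left (le_ciSup (Set.finite_range u).bddAbove i) (hw i).le

variable {u η : Fin N → ℝ} {c γ m : ℝ}

lemma vdiam_consensus_step_le [NeZero N] (hc : c ∈ Set.Icc (⨅ j, u j) (⨆ j, u j))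
    (hγ : γ ≤ 1) (hη : ∀ i, |η i| ≤ m) :
    vdiam (fun i => u i - γ * (u i - c) - (u i - c) * η i) ≤ (1 - γ + 2 * m) * vdiam u := by
  refine vdiam_le_of_forall_sub_le fun i j => ?_
  have hnoise (l : Fin N) : |(u l - c) * η l| ≤ vdiam u * m := by
    rw [abs_mul]
    exact mul_le_mul (abs_sub_le_vdiam_of_mem_Icc u hc l) (hη l) (abs_nonneg _)
      ((abs_nonneg _).trans (abs_sub_le_vdiam_of_mem_Icc u hc l))
  have hdrift : (1 - γ) * (u i - u j) ≤ (1 - γ) * vdiam u :=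
    mul_le_mul_of_nonneg_left (le_of_abs_le (abs_sub_le_vdiam u i j)) (by linarith)
  have hi := abs_le.1 (hnoise i)
  have hj := abs_le.1 (hnoise j)
  linarith

lemma abs_consensus_step_sub_le (hc : c ∈ Set.Icc (⨅ j, u j) (⨆ j, u j))
    (hγ : 0 ≤ γ) (i : Fin N) (hη : |η i| ≤ m) :
    |u i - γ * (u i - c) - (u i - c) * η i - u i| ≤ (γ + m) * vdiam u := by
  have hi := abs_sub_le_vdiam_of_mem_Icc u hc i
  calc |u i - γ * (u i - c) - (u i - c) * η i - u i|
      = |γ * (u i - c) + (u i - c) * η i| := by rw [← abs_neg]; ring_nf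
    _ ≤ |γ * (u i - c)| + |(u i - c) * η i| := abs_add_le _ _
    _ = γ * |u i - c| + |u i - c| * |η i| := by rw [abs_mul, abs_mul, abs_of_nonneg hγ]
    _ ≤ γ * vdiam u + vdiam u * m :=
        add_le_add (mul_le_mul_of_nonneg_left hi hγ)
          (mul_le_mul hi hη (abs_nonneg _) ((abs_nonneg _).trans hi))
    _ = (γ + m) * vdiam u := by ring

end vdiam

namespace CBOData

variable {N d : ℕ} {Ω : Type} [MeasurableSpace Ω] {P : Measure Ω} {C : CBOData N d Ω}

def growth (C : CBOData N d Ω) (k : ℕ) (s : Fin d) (ω : Ω) : ℝ :=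
  1 - C.γ + 2 * ⨆ i, |C.η k s i ω|

lemma xhat_mem_Icc [NeZero N] (C : CBOData N d Ω) (k : ℕ) (ω : Ω) (s : Fin d) :
    C.xhat k ω s ∈ Set.Icc (⨅ i, C.y k s ω i) (⨆ i, C.y k s ω i) := by
  have hxhat : C.xhat k ω s = (∑ i, Real.exp (-C.α * C.fhat k i ω))⁻¹
      * ∑ i, Real.exp (-C.α * C.fhat k i ω) * C.y k s ω i := by
    simp [xhat, y, WithLp.ofLp_sum, Finset.sum_apply]
  rw [hxhat]
  exact inv_sum_mul_sum_mem_Icc _ _ fun i => Real.exp_pos _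

lemma one_sub_γ_le_growth (C : CBOData N d Ω) (k : ℕ) (s : Fin d) (ω : Ω) :
    1 - C.γ ≤ C.growth k s ω := by
  have hM : 0 ≤ ⨆ i, |C.η k s i ω| := Real.iSup_nonneg fun i => abs_nonneg _
  rw [growth]
  linarith

namespace Hyp

variable (hC : C.Hyp P)
include hC

lemma one_sub_γ_mul_γ_add_le_growth (k : ℕ) (s : Fin d) (ω : Ω) :
    (1 - C.γ) * (C.γ + ⨆ i, |C.η k s i ω|) ≤ C.growth k s ω := by
  have hM : 0 ≤ ⨆ i, |C.η k s i ω| := Real.iSup_nonneg fun i => abs_nonneg _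
  have := hC.hγ
  rw [growth]
  nlinarith [this.1, this.2]

lemma growth_pos (k : ℕ) (s : Fin d) (ω : Ω) : 0 < C.growth k s ω :=
  (sub_pos.2 hC.hγ.2).trans_le (C.one_sub_γ_le_growth k s ω)

lemma y_succ (k : ℕ) (s : Fin d) (ω : Ω) :
    C.y (k + 1) s ω = fun i => C.y k s ω i - C.γ * (C.y k s ω i - C.xhat k ω s)
      - (C.y k s ω i - C.xhat k ω s) * C.η k s i ω :=
  funext fun i => hC.evol k i s ω

lemma vdiam_y_succ_le [NeZero N] (k : ℕ) (s : Fin d) (ω : Ω) :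
    vdiam (C.y (k + 1) s ω) ≤ C.growth k s ω * vdiam (C.y k s ω) := by
  rw [hC.y_succ]
  exact vdiam_consensus_step_le (C.xhat_mem_Icc k ω s) hC.hγ.2.le
    fun i => le_ciSup (f := fun i => |C.η k s i ω|) (Set.finite_range _).bddAbove i

lemma vdiam_y_le_prod [NeZero N] (k : ℕ) (s : Fin d) (ω : Ω) :
    vdiam (C.y k s ω) ≤ vdiam (C.y 0 s ω) * ∏ l ∈ Finset.range k, C.growth l s ω := by
  induction k with
  | zero => simp
  | succ k ih =>
    rw [Finset.prod_range_succ, ← mul_assoc, mul_comm _ (C.growth k s ω)]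
    exact (hC.vdiam_y_succ_le k s ω).trans
      (mul_le_mul_of_nonneg_left ih (hC.growth_pos k s ω).le)

lemma one_sub_γ_mul_abs_x_succ_sub_le [NeZero N] (k : ℕ) (i : Fin N) (s : Fin d) (ω : Ω) :
    (1 - C.γ) * |C.x (k + 1) i ω s - C.x k i ω s|
      ≤ vdiam (C.y 0 s ω) * ∏ l ∈ Finset.range (k + 1), C.growth l s ω := by
  have hstep : |C.x (k + 1) i ω s - C.x k i ω s|
      ≤ (C.γ + ⨆ j, |C.η k s j ω|) * vdiam (C.y k s ω) := by
    have := abs_consensus_step_sub_le (η := fun j => C.η k s j ω) (C.xhat_mem_Icc k ω s)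
      hC.hγ.1.le i (le_ciSup (f := fun j => |C.η k s j ω|) (Set.finite_range _).bddAbove i)
    rw [hC.evol k i s ω]
    exact this
  calc (1 - C.γ) * |C.x (k + 1) i ω s - C.x k i ω s|
      ≤ (1 - C.γ) * (C.γ + ⨆ j, |C.η k s j ω|) * vdiam (C.y k s ω) := by
        rw [mul_assoc]; exact mul_le_mul_of_nonneg_left hstep (sub_pos.2 hC.hγ.2).le
    _ ≤ C.growth k s ω * (vdiam (C.y 0 s ω) * ∏ l ∈ Finset.range k, C.growth l s ω) :=
        mul_le_mul (hC.one_sub_γ_mul_γ_add_le_growth k s ω) (hC.vdiam_y_le_prod k s ω)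
          (vdiam_nonneg ..) (hC.growth_pos k s ω).le
    _ = _ := by rw [Finset.prod_range_succ]; ring

lemma one_sub_γ_mul_abs_x_sub_le [NeZero N] (k : ℕ) (i j : Fin N) (s : Fin d) (ω : Ω) :
    (1 - C.γ) * |C.x k i ω s - C.x k j ω s|
      ≤ vdiam (C.y 0 s ω) * ∏ l ∈ Finset.range (k + 1), C.growth l s ω := by
  calc (1 - C.γ) * |C.x k i ω s - C.x k j ω s|
      ≤ C.growth k s ω * (vdiam (C.y 0 s ω) * ∏ l ∈ Finset.range k, C.growth l s ω) :=
        mul_le_mul (C.one_sub_γ_le_growth k s ω)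
          ((abs_sub_le_vdiam (C.y k s ω) i j).trans (hC.vdiam_y_le_prod k s ω))
          (abs_nonneg _) (hC.growth_pos k s ω).le
    _ = _ := by rw [Finset.prod_range_succ]; ring

lemma dist_x_succ_le [NeZero N] (k : ℕ) (i : Fin N) (ω : Ω) :
    dist (C.x k i ω) (C.x (k + 1) i ω)
      ≤ (∑ s, vdiam (C.y 0 s ω) * ∏ l ∈ Finset.range (k + 1), C.growth l s ω) /
          (1 - C.γ) := by
  rw [Finset.sum_div]
  refine (EuclideanSpace.dist_le_sum_abs_sub _ _).trans (Finset.sum_le_sum fun s _ => ?_)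
  rw [abs_sub_comm, le_div_iff₀' (sub_pos.2 hC.hγ.2)]
  exact hC.one_sub_γ_mul_abs_x_succ_sub_le k i s ω

lemma dist_x_le [NeZero N] (k : ℕ) (i j : Fin N) (ω : Ω) :
    dist (C.x k i ω) (C.x k j ω)
      ≤ (∑ s, vdiam (C.y 0 s ω) * ∏ l ∈ Finset.range (k + 1), C.growth l s ω) /
          (1 - C.γ) := by
  rw [Finset.sum_div]
  refine (EuclideanSpace.dist_le_sum_abs_sub _ _).trans (Finset.sum_le_sum fun s _ => ?_)
  rw [le_div_iff₀' (sub_pos.2 hC.hγ.2)]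
  exact hC.one_sub_γ_mul_abs_x_sub_le k i j s ω

lemma measurable_growth (k : ℕ) (s : Fin d) : Measurable (C.growth k s) :=
  ((Measurable.iSup fun i => (hC.meas_η k s i).abs).const_mul 2).const_add _

lemma iIndepFun_growth (s : Fin d) : iIndepFun (fun k => C.growth k s) P := by
  have hinj : Function.Injective fun p : ℕ × Fin N => (p.1, s, p.2) := by
    intro a b h
    simp only [Prod.mk.injEq] at h
    exact Prod.ext h.1 h.2.2
  have hblocks : iIndepFun (fun k ω i => C.η k s i ω) P :=
    (hC.η_iid.precomp hinj).curry (X := fun k i => C.η k s i) fun k i => hC.meas_η k s i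
  exact hblocks.comp (fun _ v => 1 - C.γ + 2 * ⨆ i, |v i|) fun _ =>
    ((Measurable.iSup fun i => (measurable_pi_apply i).abs).const_mul 2).const_add _

variable [IsProbabilityMeasure P]

lemma integrable_growth (k : ℕ) (s : Fin d) : Integrable (C.growth k s) P :=
  (integrable_const _).add ((integrable_iSup_abs_of_map_eq_gaussianReal
    (fun i => hC.meas_η k s i) (fun i => hC.η_gauss k s i)).const_mul 2)

lemma integral_growth_le (k : ℕ) (s : Fin d) : ∫ ω, C.growth k s ω ∂P ≤ C.th := by
  have : Nonempty (Fin N) := ⟨⟨0, hC.hN⟩⟩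
  have hmax := integral_iSup_abs_le_of_map_eq_gaussianReal
    (ne_of_gt (show (0 : ℝ) < C.ξ ^ 2 from pow_pos hC.hξ 2)) (fun i => hC.meas_η k s i)
    (fun i => hC.η_gauss k s i)
  simp only [Fintype.card_fin] at hmax
  simp only [growth]
  rw [integral_add (integrable_const _) ((integrable_iSup_abs_of_map_eq_gaussianReal
    (fun i => hC.meas_η k s i) (fun i => hC.η_gauss k s i)).const_mul 2), integral_const,
    integral_const_mul, th]
  simp only [probReal_univ, smul_eq_mul, one_mul]
  linarith [hmax.trans (sqrt_two_mul_sq_mul_log_le hC.hN hC.hξ.le)]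

lemma lintegral_prod_growth_le (s : Fin d) (n : ℕ) :
    ∫⁻ ω, ∏ l ∈ Finset.range n, ENNReal.ofReal (C.growth l s ω) ∂P
      ≤ ENNReal.ofReal C.th ^ n := by
  rw [lintegral_prod_eq_prod_lintegral_of_indepFun _ (fun l ω => ENNReal.ofReal (C.growth l s ω))
    ((hC.iIndepFun_growth s).comp (fun _ => ENNReal.ofReal) fun _ => ENNReal.measurable_ofReal)
    fun l => (hC.measurable_growth l s).ennreal_ofReal]
  calc ∏ l ∈ Finset.range n, ∫⁻ ω, ENNReal.ofReal (C.growth l s ω) ∂P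
      ≤ ∏ _l ∈ Finset.range n, ENNReal.ofReal C.th := Finset.prod_le_prod' fun l _ => by
        rw [← ofReal_integral_eq_lintegral_ofReal (hC.integrable_growth l s)
          (ae_of_all _ fun ω => (hC.growth_pos l s ω).le)]
        exact ENNReal.ofReal_le_ofReal (hC.integral_growth_le l s)
    _ = ENNReal.ofReal C.th ^ n := by simp

lemma ae_summable_prod_growth (hθ : C.th < 1) (s : Fin d) :
    ∀ᵐ ω ∂P, Summable fun n => ∏ l ∈ Finset.range n, C.growth l s ω := by
  refine ae_summable_of_tsum_lintegral_ne_top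
    (fun n => (Finset.measurable_prod _ fun l _ => hC.measurable_growth l s).aemeasurable)
    (fun n ω => Finset.prod_nonneg fun l _ => (hC.growth_pos l s ω).le) ?_
  simp_rw [ENNReal.ofReal_prod_of_nonneg fun l _ => (hC.growth_pos l s _).le]
  refine ne_top_of_le_ne_top ?_ (ENNReal.tsum_le_tsum fun n => hC.lintegral_prod_growth_le s n)
  rw [ENNReal.tsum_geometric]
  exact ENNReal.inv_ne_top.2 (tsub_pos_iff_lt.2 (ENNReal.ofReal_lt_one.2 hθ)).ne'

end Hyp

end CBOData

/-- Under the CBO setup, if `θ < 1` then there exists a random vector `x_∞ : Ω → ℝ^d`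
such that every particle converges to `x_∞` almost surely. -/
theorem stmt8 {N d : ℕ} {Ω : Type} [MeasurableSpace Ω] (P : Measure Ω)
    [IsProbabilityMeasure P] (C : CBOData N d Ω) (hC : C.Hyp P)
    (hθ : C.th < 1) :
    ∃ xinf : Ω → EuclideanSpace ℝ (Fin d), ∀ i : Fin N,
      ∀ᵐ ω ∂P, Tendsto (fun k => C.x k i ω) atTop (nhds (xinf ω)) := by
  have : NeZero N := NeZero.of_pos hC.hN
  refine ⟨fun ω => limUnder atTop fun k => C.x k 0 ω, fun i => ?_⟩
  filter_upwards [ae_all_iff.2 (hC.ae_summable_prod_growth hθ)] with ω hω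
  exact tendsto_limUnder_of_dist_le_of_summable
    ((summable_sum fun s _ => ((summable_nat_add_iff 1).2 (hω s)).mul_left _).div_const _)
    (fun k i => hC.dist_x_succ_le k i ω) (fun k i j => hC.dist_x_le k i j ω) i 0
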